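/- If a finite simple graph G is positive, then for every odd natural number k, the number of vertices of G having degree exactly k is even. -/

import Mathlib

open MeasureTheory

noncomputable section

/-- The unit interval `[0,1]` as a measure space. -/
abbrev UI : Type := Set.Icc (0:ℝ) 1

/-- A kernel is a symmetric bounded measurable function `[0,1]² → ℝ`. -/
def IsKernel (W : UI → UI → ℝ) : Prop :=
  Measurable (Function.uncurry W) ∧ (∀ x y, W x y = W y x) ∧ ∃ C : ℝ, ∀ x y, |W x y| ≤ C

open scoped Classical in
/-- The homomorphism density `t(G,W) = ∫_{[0,1]^V} ∏_{(a,b)∈E} W(p(a),p(b)) dp`. -/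
noncomputable def homDensity {V : Type} [Fintype V] (G : SimpleGraph V) (W : UI → UI → ℝ) : ℝ :=
  ∫ p : V → UI, ∏ e ∈ G.edgeFinset, W (p (Quot.out e).1) (p (Quot.out e).2)

/-- A graph is positive if `t(G,W) ≥ 0` for every kernel `W`. -/
def Positive {V : Type} [Fintype V] (G : SimpleGraph V) : Prop :=
  ∀ W : UI → UI → ℝ, IsKernel W → 0 ≤ homDensity G W

/-! For a rank-one kernel `W x y = f x * f y` the density factors over the vertices,
`t(G, W) = ∏ᵥ ∫ f ^ deg v`. For odd `k` there is a bounded step function `f` whose `k`-th moment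
is negative while all its other moments are positive; `t(G, W)` then has the sign of
`(-1) ^ #{v | deg v = k}`, so positivity of `G` forces that count to be even. -/

open Finset in
theorem Sym2.prod_toFinset_of_not_isDiag {α M : Type*} [CommMonoid M] [DecidableEq α]
    {e : Sym2 α} (he : ¬e.IsDiag) (g : α → M) :
    ∏ a ∈ e.toFinset, g a = g (Quot.out e).1 * g (Quot.out e).2 := by
  have hout : s((Quot.out e).1, (Quot.out e).2) = e := Quot.out_eq e
  rw [← hout, Sym2.mk_isDiag_iff] at he
  conv_lhs => rw [← hout]
  rw [Sym2.toFinset_mk_eq, prod_pair he]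

open Finset in
theorem SimpleGraph.prod_edgeFinset_out_mul_eq_prod_pow_degree {V M : Type*} [Fintype V]
    [DecidableEq V] [CommMonoid M] (G : SimpleGraph V) [DecidableRel G.Adj] (g : V → M) :
    ∏ e ∈ G.edgeFinset, g (Quot.out e).1 * g (Quot.out e).2 = ∏ v, g v ^ G.degree v := by
  calc ∏ e ∈ G.edgeFinset, g (Quot.out e).1 * g (Quot.out e).2
      = ∏ e ∈ G.edgeFinset, ∏ v ∈ e.toFinset, g v :=
        prod_congr rfl fun e he => (Sym2.prod_toFinset_of_not_isDiag
          (G.not_isDiag_of_mem_edgeFinset he) g).symm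
    _ = ∏ v, ∏ _e ∈ G.incidenceFinset v, g v :=
        prod_comm' fun e v => by simp [incidenceSet, and_comm]
    _ = ∏ v, g v ^ G.degree v := by simp

theorem Finset.prod_neg_of_odd_card_filter {ι R : Type*} [CommRing R] [LinearOrder R]
    [IsStrictOrderedRing R] {s : Finset ι} {p : ι → Prop} [DecidablePred p] {f : ι → R}
    (hodd : Odd (s.filter p).card) (hneg : ∀ i ∈ s, p i → f i < 0)
    (hpos : ∀ i ∈ s, ¬p i → 0 < f i) :
    ∏ i ∈ s, f i < 0 := by
  rw [← prod_filter_mul_prod_filter_not s p]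
  refine mul_neg_of_neg_of_pos ?_ (prod_pos fun i hi => (mem_filter.1 hi).elim (hpos i))
  have hprod : 0 < ∏ i ∈ s.filter p, -f i :=
    prod_pos fun i hi => neg_pos.2 ((mem_filter.1 hi).elim (hneg i))
  rwa [prod_neg, hodd.neg_one_pow, neg_one_mul, neg_pos] at hprod

theorem intervalIntegrable_of_eqOn_Ioo {E : Type*} [NormedAddCommGroup E] {f : ℝ → E}
    {a b : ℝ} {c : E} (hab : a ≤ b) (h : Set.EqOn f (fun _ => c) (Set.Ioo a b)) :
    IntervalIntegrable f volume a b := by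
  rw [intervalIntegrable_iff_integrableOn_Ioo_of_le hab]
  exact (integrableOn_const (by simp)).congr_fun h.symm measurableSet_Ioo

theorem intervalIntegral_eq_of_eqOn_Ioo {E : Type*} [NormedAddCommGroup E] [NormedSpace ℝ E]
    [CompleteSpace E] {f : ℝ → E} {a b : ℝ} {c : E} (hab : a ≤ b)
    (h : Set.EqOn f (fun _ => c) (Set.Ioo a b)) :
    ∫ x in a..b, f x = (b - a) • c := by
  rw [intervalIntegral.integral_congr_Ioo_of_le hab h, intervalIntegral.integral_const]

theorem integral_unitInterval_eq_intervalIntegral (g : ℝ → ℝ) :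
    ∫ x : UI, g x = ∫ x in (0:ℝ)..1, g x := by
  rw [intervalIntegral.integral_of_le zero_le_one, ← integral_Icc_eq_integral_Ioc]
  exact integral_subtype_comap measurableSet_Icc g

def threeStepFun (a b u v w : ℝ) (x : ℝ) : ℝ := if x < a then u else if x < b then v else w

theorem measurable_threeStepFun (a b u v w : ℝ) : Measurable (threeStepFun a b u v w) :=
  Measurable.ite measurableSet_Iio measurable_const
    (Measurable.ite measurableSet_Iio measurable_const measurable_const)

theorem apply_threeStepFun (φ : ℝ → ℝ) (a b u v w x : ℝ) :
    φ (threeStepFun a b u v w x) = threeStepFun a b (φ u) (φ v) (φ w) x := by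
  unfold threeStepFun; split_ifs <;> rfl

theorem intervalIntegral_threeStepFun {c a b d : ℝ} (hca : c ≤ a) (hab : a ≤ b) (hbd : b ≤ d)
    (u v w : ℝ) :
    ∫ x in c..d, threeStepFun a b u v w x = (a - c) * u + (b - a) * v + (d - b) * w := by
  have h₁ : Set.EqOn (threeStepFun a b u v w) (fun _ => u) (Set.Ioo c a) := fun x hx => by
    simp [threeStepFun, hx.2]
  have h₂ : Set.EqOn (threeStepFun a b u v w) (fun _ => v) (Set.Ioo a b) := fun x hx => by
    simp [threeStepFun, hx.1.not_gt, hx.2]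
  have h₃ : Set.EqOn (threeStepFun a b u v w) (fun _ => w) (Set.Ioo b d) := fun x hx => by
    simp [threeStepFun, (hab.trans_lt hx.1).not_gt, hx.1.not_gt]
  have i₁ := intervalIntegrable_of_eqOn_Ioo hca h₁
  have i₂ := intervalIntegrable_of_eqOn_Ioo hab h₂
  have i₃ := intervalIntegrable_of_eqOn_Ioo hbd h₃
  rw [← intervalIntegral.integral_add_adjacent_intervals i₁ (i₂.trans i₃),
    ← intervalIntegral.integral_add_adjacent_intervals i₂ i₃,
    intervalIntegral_eq_of_eqOn_Ioo hca h₁, intervalIntegral_eq_of_eqOn_Ioo hab h₂,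
    intervalIntegral_eq_of_eqOn_Ioo hbd h₃]
  simp only [smul_eq_mul]
  ring

theorem four_le_two_pow_div_two_pow {m n : ℕ} (h : m + 2 ≤ n) : (4 : ℝ) ≤ 2 ^ n / 2 ^ m := by
  rw [le_div_iff₀ (by positivity)]
  calc (4 : ℝ) * 2 ^ m = 2 ^ (m + 2) := by ring
    _ ≤ 2 ^ n := pow_le_pow_right₀ (by norm_num) h

theorem moment_numerator_pos {j k : ℕ} (hk : Odd k) (hne : j ≠ k) :
    0 < 3 * (-1 : ℝ) ^ j + 2 ^ k / 2 ^ j + 2 ^ j / 2 ^ k := by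
  have hkj : (0 : ℝ) < 2 ^ k / 2 ^ j := by positivity
  have hjk : (0 : ℝ) < 2 ^ j / 2 ^ k := by positivity
  rcases Nat.even_or_odd j with hj | hj
  · rw [hj.neg_one_pow]; linarith
  · rw [hj.neg_one_pow]
    obtain ⟨a, rfl⟩ := hj
    obtain ⟨b, rfl⟩ := hk
    rcases lt_or_gt_of_ne hne with hlt | hlt
    · linarith [four_le_two_pow_div_two_pow (m := 2 * a + 1) (n := 2 * b + 1) (by omega)]
    · linarith [four_le_two_pow_div_two_pow (m := 2 * b + 1) (n := 2 * a + 1) (by omega)]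

/-- Weights `3 : 2^k : 2^(-k)` on the values `-1, 1/2, 2`: the `k`-th moment is `-1/D`, while
for every other `j` of the same parity `2^(k-j) + 2^(j-k) ≥ 4` outweighs the `-3`. -/
def oddMomentTestFun (k : ℕ) : ℝ → ℝ :=
  let D : ℝ := 3 + 2 ^ k + (2 ^ k)⁻¹
  threeStepFun (3 / D) ((3 + 2 ^ k) / D) (-1) (1 / 2) 2

theorem intervalIntegral_oddMomentTestFun_pow (k j : ℕ) :
    ∫ x in (0:ℝ)..1, oddMomentTestFun k x ^ j
      = (3 * (-1) ^ j + 2 ^ k / 2 ^ j + 2 ^ j / 2 ^ k) / (3 + 2 ^ k + (2 ^ k)⁻¹) := by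
  have hD : (0 : ℝ) < 3 + 2 ^ k + (2 ^ k)⁻¹ := by positivity
  simp only [oddMomentTestFun, apply_threeStepFun (· ^ j)]
  rw [intervalIntegral_threeStepFun (by positivity)
    (div_le_div_of_nonneg_right (by linarith [pow_pos (two_pos (α := ℝ)) k]) hD.le)
    ((div_le_one hD).2 (by linarith [inv_pos.2 (pow_pos (two_pos (α := ℝ)) k)])),
    one_div_pow]
  field_simp
  ring

theorem exists_moment_neg_and_others_pos {k : ℕ} (hk : Odd k) :
    ∃ f : UI → ℝ, Measurable f ∧ (∀ x, |f x| ≤ 2) ∧ ∫ x, f x ^ k < 0 ∧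
      ∀ j ≠ k, 0 < ∫ x, f x ^ j := by
  have hD : (0 : ℝ) < 3 + 2 ^ k + (2 ^ k)⁻¹ := by positivity
  refine ⟨fun x => oddMomentTestFun k x,
    (measurable_threeStepFun _ _ _ _ _).comp measurable_subtype_coe,
    fun x => ?_, ?_, fun j hj => ?_⟩
  · simp only [oddMomentTestFun, threeStepFun]
    split_ifs <;> norm_num
  · rw [integral_unitInterval_eq_intervalIntegral (oddMomentTestFun k · ^ k),
      intervalIntegral_oddMomentTestFun_pow, hk.neg_one_pow, div_self (by positivity)]
    exact div_neg_of_neg_of_pos (by norm_num) hD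
  · rw [integral_unitInterval_eq_intervalIntegral (oddMomentTestFun k · ^ j),
      intervalIntegral_oddMomentTestFun_pow]
    exact div_pos (moment_numerator_pos hk hj) hD

theorem isKernel_mul_self {f : UI → ℝ} (hf : Measurable f) {C : ℝ} (hC : ∀ x, |f x| ≤ C) :
    IsKernel fun x y => f x * f y := by
  refine ⟨(hf.comp measurable_fst).mul (hf.comp measurable_snd), fun x y => mul_comm _ _,
    C * C, fun x y => ?_⟩
  rw [abs_mul]
  exact mul_le_mul (hC x) (hC y) (abs_nonneg _) ((abs_nonneg _).trans (hC x))

open scoped Classical in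
theorem homDensity_mul_self {V : Type} [Fintype V] (G : SimpleGraph V) (f : UI → ℝ) :
    homDensity G (fun x y => f x * f y) = ∏ v, ∫ x, f x ^ G.degree v := by
  simp only [homDensity,
    fun p : V → UI => G.prod_edgeFinset_out_mul_eq_prod_pow_degree fun v => f (p v)]
  exact integral_fintype_prod_volume_eq_prod fun v x => f x ^ G.degree v

open scoped Classical in
theorem positive_even_count_odd_degree {V : Type} [Fintype V] (G : SimpleGraph V)
    (h : Positive G) (k : ℕ) (hk : Odd k) :
    Even (Finset.univ.filter (fun v : V => G.degree v = k)).card := by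
  obtain ⟨f, hf, hf_bdd, hf_k, hf_ne_k⟩ := exists_moment_neg_and_others_pos hk
  by_contra hcard
  refine (h _ (isKernel_mul_self hf hf_bdd)).not_gt ?_
  rw [homDensity_mul_self]
  exact Finset.prod_neg_of_odd_card_filter (Nat.not_even_iff_odd.1 hcard)
    (fun v _ hv => hv ▸ hf_k) (fun v _ hv => hf_ne_k _ hv)

end
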